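/- Nega-Hadamard transform as a generalized Walsh–Hadamard transform: Let n ≥ 1, k ≥ 1, f : F_2^n → Z_{2^k}, and define g : F_2^n → Z_{2^{k+1}} by g(x) = 2f(x) + 2^{k-1} s_1(x) + 2^k s_2(x) (computed in Z_{2^{k+1}}, with f(x) lifted to {0,...,2^k - 1}), where s_1(x) = wt(x) mod 2 ∈ {0,1} and s_2(x) = C(wt(x),2) mod 2 ∈ {0,1}. Then for all u ∈ F_2^n: N_f(u) = H_g(u), where N_f(u) = 2^{-n/2} Σ_{x} ζ_{2^k}^{f(x)} (-1)^{u·x} i^{wt(x)} and H_g(u) = 2^{-n/2} Σ_x ζ_{2^{k+1}}^{g(x)} (-1)^{u·x}. -/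

import Mathlib

open Complex Finset

noncomputable section

/-- `ζ_q = exp(2πi/q)`. -/
def zetaC (q : ℕ) : ℂ := Complex.exp (2 * Real.pi * Complex.I / q)

/-- Hamming weight of a binary vector. -/
def wtv {n : ℕ} (x : Fin n → ZMod 2) : ℕ := ∑ j, (x j).val

/-- `(-1)^{u·x}` where `u·x` is the dot product over `F_2`. -/
def chr {n : ℕ} (u x : Fin n → ZMod 2) : ℂ := (-1 : ℂ) ^ (∑ j, u j * x j : ZMod 2).val

/-- `2^{-n/2}` as a complex number. -/
def nrm (n : ℕ) : ℂ := (((2 : ℝ) ^ (-(n : ℝ) / 2) : ℝ) : ℂ)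

/-- The generalized Walsh-Hadamard transform `H_f(u) = 2^{-n/2} Σ_x ζ_q^{f(x)} (-1)^{u·x}`. -/
def genH {n q : ℕ} (f : (Fin n → ZMod 2) → ZMod q) (u : Fin n → ZMod 2) : ℂ :=
  nrm n * ∑ x, zetaC q ^ (f x).val * chr u x

/-- The nega-Hadamard transform `N_f(u) = 2^{-n/2} Σ_x ζ_q^{f(x)} (-1)^{u·x} i^{wt(x)}`. -/
def negaH {n q : ℕ} (f : (Fin n → ZMod 2) → ZMod q) (u : Fin n → ZMod 2) : ℂ :=
  nrm n * ∑ x, zetaC q ^ (f x).val * chr u x * Complex.I ^ wtv x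

lemma zetaC_pow (q m : ℕ) : zetaC q ^ m = Complex.exp (m * (2 * Real.pi * Complex.I / q)) := by
  rw [zetaC, ← Complex.exp_nat_mul]

lemma zetaC_pow_self (q : ℕ) (hq : q ≠ 0) : zetaC q ^ q = 1 := by
  rw [zetaC_pow, mul_div_assoc', mul_div_cancel_left₀ _ (by exact_mod_cast hq : (q:ℂ) ≠ 0),
    Complex.exp_two_pi_mul_I]

lemma zetaC_sq (k : ℕ) : zetaC (2 ^ (k + 1)) ^ 2 = zetaC (2 ^ k) := by
  rw [zetaC_pow, zetaC]
  congr 1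
  have h2 : (((2 ^ (k+1) : ℕ)) : ℂ) = 2 * (((2 ^ k : ℕ)) : ℂ) := by push_cast; ring
  rw [h2]
  have : (((2 ^ k : ℕ)) : ℂ) ≠ 0 := Nat.cast_ne_zero.mpr (by positivity)
  field_simp
  ring

lemma zetaC_pow_half (k : ℕ) : zetaC (2 ^ (k + 1)) ^ (2 ^ k) = -1 := by
  rw [zetaC_pow]
  have h2 : (((2 ^ (k+1) : ℕ)) : ℂ) = 2 * (((2 ^ k : ℕ)) : ℂ) := by push_cast; ring
  rw [h2]
  have hne : (((2 ^ k : ℕ)) : ℂ) ≠ 0 := Nat.cast_ne_zero.mpr (by positivity)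
  rw [show (((2 ^ k : ℕ)) : ℂ) * (2 * ↑Real.pi * Complex.I / (2 * (((2 ^ k : ℕ)) : ℂ))) = ↑Real.pi * Complex.I by field_simp, Complex.exp_pi_mul_I]

lemma zetaC_pow_quarter (k : ℕ) (hk : 1 ≤ k) : zetaC (2 ^ (k + 1)) ^ (2 ^ (k - 1)) = Complex.I := by
  rw [zetaC_pow]
  have h2 : (((2 ^ (k+1) : ℕ)) : ℂ) = 4 * (((2 ^ (k-1) : ℕ)) : ℂ) := by
    push_cast
    rw [show k + 1 = (k-1) + 2 by omega, pow_add]; ring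
  rw [h2]
  have hne : (((2 ^ (k-1) : ℕ)) : ℂ) ≠ 0 := Nat.cast_ne_zero.mpr (by positivity)
  rw [show (((2 ^ (k-1) : ℕ)) : ℂ) * (2 * ↑Real.pi * Complex.I / (4 * (((2 ^ (k-1) : ℕ)) : ℂ))) = (↑(Real.pi/2) : ℂ) * Complex.I by push_cast; field_simp; ring]
  rw [Complex.exp_mul_I, ← Complex.ofReal_cos, ← Complex.ofReal_sin,
    Real.cos_pi_div_two, Real.sin_pi_div_two]
  simp

lemma I_pow_eq (w : ℕ) : (Complex.I) ^ w = Complex.I ^ (w % 2) * (-1) ^ (Nat.choose w 2) := by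
  induction w with
  | zero => simp
  | succ w ih =>
    rw [pow_succ, ih, Nat.choose_succ_succ, Nat.choose_one_right, pow_add]
    rcases Nat.even_or_odd w with he | ho
    · have h1 : w % 2 = 0 := Nat.even_iff.mp he
      have h2 : (w + 1) % 2 = 1 := by omega
      rw [h1, h2, he.neg_one_pow]
      ring_nf
    · have h1 : w % 2 = 1 := Nat.odd_iff.mp ho
      have h2 : (w + 1) % 2 = 0 := by omega
      rw [h1, h2, ho.neg_one_pow]
      rw [pow_one, pow_zero, one_mul, mul_right_comm, ← sq, Complex.I_sq]


lemma key {k : ℕ} (hk : 1 ≤ k) (F w : ℕ) :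
    zetaC (2 ^ (k+1)) ^
      (((2 * F + 2 ^ (k - 1) * (w % 2) + 2 ^ k * (Nat.choose w 2 % 2) : ℕ) :
        ZMod (2 ^ (k+1))).val) = zetaC (2 ^ k) ^ F * Complex.I ^ w := by
  have hne : (2 : ℕ) ^ (k+1) ≠ 0 := by positivity
  haveI : NeZero ((2:ℕ) ^ (k+1)) := ⟨hne⟩
  rw [ZMod.val_natCast, ← pow_eq_pow_mod _ (zetaC_pow_self _ hne)]
  rw [pow_add, pow_add, pow_mul, pow_mul, pow_mul, zetaC_sq, zetaC_pow_half,
    zetaC_pow_quarter k hk, I_pow_eq w, ← neg_one_pow_eq_pow_mod_two]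
  ring

/-- the nega-Hadamard transform of `f : F_2^n → Z_{2^k}` equals the
generalized Walsh-Hadamard transform of
`g(x) = 2 f(x) + 2^{k-1} s_1(x) + 2^k s_2(x) : F_2^n → Z_{2^{k+1}}`. -/
theorem negaH_eq_genH {n k : ℕ} (hn : 1 ≤ n) (hk : 1 ≤ k)
    (f : (Fin n → ZMod 2) → ZMod (2 ^ k))
    (g : (Fin n → ZMod 2) → ZMod (2 ^ (k + 1)))
    (hg : ∀ x, g x =
      ((2 * (f x).val + 2 ^ (k - 1) * (wtv x % 2) + 2 ^ k * (Nat.choose (wtv x) 2 % 2) : ℕ) :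
        ZMod (2 ^ (k + 1))))
    (u : Fin n → ZMod 2) :
    negaH f u = genH g u := by
  unfold negaH genH
  congr 1
  apply Finset.sum_congr rfl
  intro x _
  rw [hg x, key hk ((f x).val) (wtv x)]
  ring

end
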